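/- arXiv:2504.18506 — 2 statements merged into one kernel-verified Lean document; each statement's English description precedes it below -/
import Mathlib

section
/- Let x_τ = α_τ x_1 + σ_τ x_0 with x_1 ~ p_data, x_0 ~ N(0,I) independent, α_τ > 0, σ_τ > 0, and marginal density p_τ. Then the marginal velocity u_τ(x) = E[α̇_τ x_1 + σ̇_τ x_0 | x_τ = x] satisfies u_τ(x) = (α̇_τ/α_τ) x − ((σ̇_τ σ_τ α_τ − α̇_τ σ_τ²)/α_τ) ∇_x log p_τ(x). -/
open MeasureTheory ProbabilityTheory Real

noncomputable section

/-- Multivariate isotropic Gaussian density on `ℝ^k` with mean `m` and covariance `v • I`. -/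
def gaussDensity (k : ℕ) (v : ℝ) (z m : EuclideanSpace ℝ (Fin k)) : ℝ :=
  (2 * π * v) ^ (-(k : ℝ) / 2) * Real.exp (-‖z - m‖ ^ 2 / (2 * v))

lemma gauss_nonneg (k : ℕ) (v : ℝ) (hv : 0 < v) (z m : EuclideanSpace ℝ (Fin k)) :
    0 ≤ gaussDensity k v z m := by
  unfold gaussDensity
  positivity

lemma gauss_le (k : ℕ) (v : ℝ) (hv : 0 < v) (z m : EuclideanSpace ℝ (Fin k)) :
    gaussDensity k v z m ≤ (2 * π * v) ^ (-(k : ℝ) / 2) := by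
  unfold gaussDensity
  have h1 : Real.exp (-‖z - m‖ ^ 2 / (2 * v)) ≤ 1 := by
    apply Real.exp_le_one_iff.mpr
    have : (0:ℝ) ≤ ‖z - m‖ ^ 2 / (2 * v) := by positivity
    linarith [neg_div (2*v) (‖z - m‖^2)]
  calc (2 * π * v) ^ (-(k : ℝ) / 2) * Real.exp (-‖z - m‖ ^ 2 / (2 * v))
      ≤ (2 * π * v) ^ (-(k : ℝ) / 2) * 1 := by
        apply mul_le_mul_of_nonneg_left h1
        positivity
    _ = (2 * π * v) ^ (-(k : ℝ) / 2) := mul_one _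

lemma gauss_cont (k : ℕ) (v : ℝ) (ατ : ℝ) (x : EuclideanSpace ℝ (Fin k)) :
    Continuous (fun x1 : EuclideanSpace ℝ (Fin k) => gaussDensity k v x (ατ • x1)) := by
  unfold gaussDensity
  fun_prop

/-- **Flow matching score identity.** Let `x_τ = α_τ x₁ + σ_τ x₀` with `x₁ ~ P` (the data
distribution, finite second moment), `x₀ ~ N(0, I)` independent, `α_τ > 0`, `σ_τ > 0`, and
marginal density `pτ x = ∫ gaussDensity σ_τ² x (α_τ x₁) dP(x₁)`, assumed positive with
gradient given by differentiation under the integral (`hgrad`).  Since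
`x₀ = (x_τ − α_τ x₁)/σ_τ`, the marginal velocity `u_τ(x) = E[α̇_τ x₁ + σ̇_τ x₀ ∣ x_τ = x]`
is the density-weighted average `hu`, and it satisfies
`u_τ(x) = (α̇_τ/α_τ) x − ((σ̇_τ σ_τ α_τ − α̇_τ σ_τ²)/α_τ) ∇ log pτ(x)`. -/
theorem flow_matching_marginal_velocity {k : ℕ}
    (P : Measure (EuclideanSpace ℝ (Fin k))) [IsProbabilityMeasure P]
    (hmom : Integrable (fun x1 => ‖x1‖ ^ 2) P)
    (ατ στ ατ' στ' : ℝ) (hα : 0 < ατ) (hσ : 0 < στ)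
    (pτ : EuclideanSpace ℝ (Fin k) → ℝ)
    (hpτ : ∀ x, pτ x = ∫ x1, gaussDensity k (στ ^ 2) x (ατ • x1) ∂P)
    (hpos : ∀ x, 0 < pτ x)
    (hgrad : ∀ x, HasGradientAt pτ
      (∫ x1, (gaussDensity k (στ ^ 2) x (ατ • x1) * (στ ^ 2)⁻¹) • (ατ • x1 - x) ∂P) x)
    (u : EuclideanSpace ℝ (Fin k) → EuclideanSpace ℝ (Fin k))
    (hu : ∀ x, u x = (pτ x)⁻¹ •
      ∫ x1, gaussDensity k (στ ^ 2) x (ατ • x1) •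
        (ατ' • x1 + (στ' / στ) • (x - ατ • x1)) ∂P)
    (x : EuclideanSpace ℝ (Fin k)) :
    u x = (ατ' / ατ) • x -
      ((στ' * στ * ατ - ατ' * στ ^ 2) / ατ) • gradient (fun y => Real.log (pτ y)) x := by
  have hv : (0:ℝ) < στ ^ 2 := by positivity
  set g : EuclideanSpace ℝ (Fin k) → ℝ := fun x1 => gaussDensity k (στ ^ 2) x (ατ • x1) with hg
  set G : EuclideanSpace ℝ (Fin k) := ∫ x1, (g x1 * (στ ^ 2)⁻¹) • (ατ • x1 - x) ∂P with hG
  set c : ℝ := (στ' * στ * ατ - ατ' * στ ^ 2) / ατ with hc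
  -- gradient of log pτ
  have hlog : gradient (fun y => Real.log (pτ y)) x = (pτ x)⁻¹ • G := by
    have h1 : HasFDerivAt pτ (InnerProductSpace.toDual ℝ _ G) x :=
      (hgrad x).hasFDerivAt
    have h2 : HasFDerivAt (fun y => Real.log (pτ y)) ((pτ x)⁻¹ • InnerProductSpace.toDual ℝ _ G) x :=
      (Real.hasDerivAt_log (hpos x).ne').comp_hasFDerivAt x h1
    have h3 : HasGradientAt (fun y => Real.log (pτ y)) ((pτ x)⁻¹ • G) x := by
      rw [hasGradientAt_iff_hasFDerivAt]
      rw [LinearIsometryEquiv.map_smul]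
      exact h2
    exact h3.gradient
  rw [hlog]
  -- integrability
  set C : ℝ := (2 * π * στ ^ 2) ^ (-(k : ℝ) / 2) with hC
  have hgC : ∀ x1, ‖g x1‖ ≤ C := fun x1 => by
    rw [Real.norm_of_nonneg (gauss_nonneg k _ hv _ _)]
    exact gauss_le k _ hv _ _
  have hgmeas : AEStronglyMeasurable g P := (gauss_cont k _ ατ x).aestronglyMeasurable
  have hg_int : Integrable g P :=
    (integrable_const C).mono' hgmeas (Filter.Eventually.of_forall hgC)
  have hgx1_int : Integrable (fun x1 => g x1 • x1) P := by
    apply Integrable.mono' ((integrable_const C).add (hmom.const_mul C))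
    · exact (gauss_cont k _ ατ x).aestronglyMeasurable.smul aestronglyMeasurable_id
    · filter_upwards with x1
      rw [norm_smul, Real.norm_of_nonneg (gauss_nonneg k _ hv _ _)]
      have h1 : ‖x1‖ ≤ 1 + ‖x1‖ ^ 2 := by nlinarith [norm_nonneg x1, sq_nonneg (‖x1‖ - 1)]
      have h2 : g x1 * ‖x1‖ ≤ C * (1 + ‖x1‖ ^ 2) := by
        have := hgC x1
        rw [Real.norm_of_nonneg (gauss_nonneg k _ hv _ _)] at this
        have hgnn := gauss_nonneg k (στ^2) hv x (ατ • x1)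
        nlinarith [norm_nonneg x1]
      calc g x1 * ‖x1‖ ≤ C * (1 + ‖x1‖ ^ 2) := h2
        _ = C + C * ‖x1‖ ^ 2 := by ring
  -- two integrable pieces
  have hI1 : Integrable (fun x1 => (ατ' / ατ) • (g x1 • x)) P :=
    ((hg_int.smul_const x).smul (ατ' / ατ))
  have hI2 : Integrable (fun x1 => c • ((g x1 * (στ ^ 2)⁻¹) • (ατ • x1 - x))) P := by
    have : Integrable (fun x1 => (g x1 * (στ ^ 2)⁻¹) • (ατ • x1 - x)) P := by
      have heq : (fun x1 => (g x1 * (στ ^ 2)⁻¹) • (ατ • x1 - x))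
          = fun x1 => (στ ^ 2)⁻¹ • (ατ • (g x1 • x1) - g x1 • x) := by
        funext x1
        rw [smul_sub, smul_smul, smul_comm ατ, smul_smul, mul_comm (g x1)]
        module
      rw [heq]
      exact (((hgx1_int.smul ατ).sub (hg_int.smul_const x)).smul (στ ^ 2)⁻¹)
    exact this.smul c
  -- pointwise identity
  have hpt : ∀ x1 : EuclideanSpace ℝ (Fin k),
      g x1 • (ατ' • x1 + (στ' / στ) • (x - ατ • x1))
        = (ατ' / ατ) • (g x1 • x) - c • ((g x1 * (στ ^ 2)⁻¹) • (ατ • x1 - x)) := by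
    intro x1
    rw [hc]
    match_scalars <;> field_simp <;> ring
  rw [hu x]
  have hint : (∫ x1, g x1 • (ατ' • x1 + (στ' / στ) • (x - ατ • x1)) ∂P)
      = (ατ' / ατ) • ((pτ x) • x) - c • G := by
    simp only [hpt]
    rw [integral_sub hI1 hI2, integral_smul, integral_smul, integral_smul_const, hpτ x, hG]
  rw [hint, smul_sub, smul_comm ((pτ x)⁻¹) (ατ' / ατ), smul_smul (pτ x)⁻¹ (pτ x),
    inv_mul_cancel₀ (hpos x).ne', one_smul, smul_comm ((pτ x)⁻¹) c]
end
end

section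
/- Inverting the score-velocity relation: under the flow matching setup, the score of the marginal distribution can be recovered from the marginal velocity via ∇_x log p_τ(x) = (α_τ / (σ̇_τ σ_τ α_τ − α̇_τ σ_τ²)) · ((α̇_τ/α_τ) x − u_τ(x)), provided σ̇_τ σ_τ α_τ − α̇_τ σ_τ² ≠ 0. -/
open MeasureTheory ProbabilityTheory Real

noncomputable section

/-- **Inverting the score–velocity relation.** Let `x_τ = α_τ x₁ + σ_τ x₀` with `x₁ ~ P` (the data
distribution, finite second moment), `x₀ ~ N(0, I)` independent, `α_τ > 0`, `σ_τ > 0`, and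
marginal density `pτ x = ∫ gaussDensity σ_τ² x (α_τ x₁) dP(x₁)`, assumed positive with
gradient given by differentiation under the integral (`hgrad`).  Since
`x₀ = (x_τ − α_τ x₁)/σ_τ`, the marginal velocity `u_τ(x) = E[α̇_τ x₁ + σ̇_τ x₀ ∣ x_τ = x]`
is the density-weighted average `hu`.  Provided `σ̇_τ σ_τ α_τ − α̇_τ σ_τ² ≠ 0`, the score
of the marginal can be recovered from the marginal velocity:
`∇ log pτ(x) = (α_τ/(σ̇_τ σ_τ α_τ − α̇_τ σ_τ²)) ((α̇_τ/α_τ) x − u_τ(x))`. -/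
theorem flow_matching_score_recovery {k : ℕ}
    (P : Measure (EuclideanSpace ℝ (Fin k))) [IsProbabilityMeasure P]
    (hmom : Integrable (fun x1 => ‖x1‖ ^ 2) P)
    (ατ στ ατ' στ' : ℝ) (hα : 0 < ατ) (hσ : 0 < στ)
    (pτ : EuclideanSpace ℝ (Fin k) → ℝ)
    (hpτ : ∀ x, pτ x = ∫ x1, gaussDensity k (στ ^ 2) x (ατ • x1) ∂P)
    (hpos : ∀ x, 0 < pτ x)
    (hgrad : ∀ x, HasGradientAt pτ
      (∫ x1, (gaussDensity k (στ ^ 2) x (ατ • x1) * (στ ^ 2)⁻¹) • (ατ • x1 - x) ∂P) x)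
    (u : EuclideanSpace ℝ (Fin k) → EuclideanSpace ℝ (Fin k))
    (hu : ∀ x, u x = (pτ x)⁻¹ •
      ∫ x1, gaussDensity k (στ ^ 2) x (ατ • x1) •
        (ατ' • x1 + (στ' / στ) • (x - ατ • x1)) ∂P)
    (hdenom : στ' * στ * ατ - ατ' * στ ^ 2 ≠ 0)
    (x : EuclideanSpace ℝ (Fin k)) :
    gradient (fun y => Real.log (pτ y)) x =
      (ατ / (στ' * στ * ατ - ατ' * στ ^ 2)) • ((ατ' / ατ) • x - u x) := by
  set f : EuclideanSpace ℝ (Fin k) → ℝ :=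
    fun x1 => gaussDensity k (στ ^ 2) x (ατ • x1) with hf
  set A : EuclideanSpace ℝ (Fin k) := ∫ x1, f x1 • (ατ • x1 - x) ∂P with hA
  have hσ2 : (0:ℝ) < στ ^ 2 := by positivity
  have hC : (0:ℝ) < 2 * π * στ ^ 2 := by positivity
  set C : ℝ := (2 * π * στ ^ 2) ^ (-(k : ℝ) / 2) with hCdef
  have hfnonneg : ∀ x1, 0 ≤ f x1 := by
    intro x1
    have : (0:ℝ) < C := Real.rpow_pos_of_pos hC _
    exact mul_nonneg this.le (Real.exp_pos _).le
  have hfle : ∀ x1, f x1 ≤ C := by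
    intro x1
    have h1 : Real.exp (-‖x - ατ • x1‖ ^ 2 / (2 * στ ^ 2)) ≤ 1 := by
      apply Real.exp_le_one_iff.mpr
      apply div_nonpos_of_nonpos_of_nonneg
      · simp [sq_nonneg]
      · positivity
    have : (0:ℝ) < C := Real.rpow_pos_of_pos hC _
    calc f x1 = C * Real.exp (-‖x - ατ • x1‖ ^ 2 / (2 * στ ^ 2)) := rfl
      _ ≤ C * 1 := by nlinarith
      _ = C := mul_one C
  have hfcont : Continuous f := by
    unfold f
    unfold gaussDensity
    fun_prop
  have hfint : Integrable f P := by
    apply Integrable.mono' (integrable_const C) hfcont.aestronglyMeasurable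
    filter_upwards with x1
    rw [Real.norm_of_nonneg (hfnonneg x1)]
    exact hfle x1
  have hnormint : Integrable (fun x1 => ‖x1‖) P := by
    apply Integrable.mono' ((integrable_const (1:ℝ)).add hmom)
      continuous_norm.aestronglyMeasurable
    filter_upwards with x1
    rw [norm_norm]
    simp only [Pi.add_apply]
    rcases le_total ‖x1‖ 1 with h | h
    · nlinarith [sq_nonneg ‖x1‖]
    · nlinarith
  have hint1 : Integrable (fun x1 => f x1 • (ατ • x1 - x)) P := by
    have hbd : Integrable ((fun x1 => C * ατ * ‖x1‖) + fun _ => C * ‖x‖) P :=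
      (hnormint.const_mul (C * ατ)).add (integrable_const (C * ‖x‖))
    have hcs : Continuous (fun x1 => f x1 • (ατ • x1 - x)) := by fun_prop
    have hms : AEStronglyMeasurable (fun x1 => f x1 • (ατ • x1 - x)) P := hcs.aestronglyMeasurable
    apply Integrable.mono' hbd hms
    filter_upwards with x1
    have hC0 : (0:ℝ) < C := Real.rpow_pos_of_pos hC _
    simp only [Pi.add_apply]
    have heq : ‖f x1 • (ατ • x1 - x)‖ = f x1 * ‖ατ • x1 - x‖ := by
      rw [norm_smul, Real.norm_of_nonneg (hfnonneg x1)]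
    rw [heq]
    have h2 : ‖ατ • x1 - x‖ ≤ ατ * ‖x1‖ + ‖x‖ := by
      calc ‖ατ • x1 - x‖ ≤ ‖ατ • x1‖ + ‖x‖ := norm_sub_le _ _
        _ = ατ * ‖x1‖ + ‖x‖ := by rw [norm_smul, Real.norm_of_nonneg hα.le]
    calc f x1 * ‖ατ • x1 - x‖ ≤ C * (ατ * ‖x1‖ + ‖x‖) := by
          apply mul_le_mul (hfle x1) h2 (norm_nonneg _) hC0.le
      _ = C * ατ * ‖x1‖ + C * ‖x‖ := by ring
  have hint2 : Integrable (fun x1 => f x1 • x) P := hfint.smul_const x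
  -- gradient of pτ
  have hgradA : HasGradientAt pτ ((στ ^ 2)⁻¹ • A) x := by
    have := hgrad x
    convert this using 1
    rw [hA, ← integral_smul]
    congr 1; ext x1
    rw [smul_smul, mul_comm]
  -- integral in hu
  have huA : u x = (pτ x)⁻¹ • ((ατ' / ατ - στ' / στ) • A + (ατ' / ατ) • (pτ x • x)) := by
    rw [hu x]
    congr 1
    have hrw : ∀ x1 : EuclideanSpace ℝ (Fin k),
        f x1 • (ατ' • x1 + (στ' / στ) • (x - ατ • x1)) =
        (ατ' / ατ - στ' / στ) • (f x1 • (ατ • x1 - x)) + (ατ' / ατ) • (f x1 • x) := by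
      intro x1
      match_scalars <;> field_simp <;> ring
    have h1' : Integrable (fun x1 => (ατ' / ατ - στ' / στ) • (f x1 • (ατ • x1 - x))) P :=
      hint1.fun_smul _
    have h2' : Integrable (fun x1 => (ατ' / ατ) • (f x1 • x)) P := hint2.fun_smul _
    rw [show (∫ x1, f x1 • (ατ' • x1 + (στ' / στ) • (x - ατ • x1)) ∂P) =
        ∫ x1, ((ατ' / ατ - στ' / στ) • (f x1 • (ατ • x1 - x)) + (ατ' / ατ) • (f x1 • x)) ∂P
        from integral_congr_ae (Filter.Eventually.of_forall hrw)]
    rw [integral_add h1' h2', integral_smul, integral_smul, ← hA]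
    congr 2
    rw [integral_smul_const, hpτ x]
  -- gradient of log pτ
  have hlog : HasGradientAt (fun y => Real.log (pτ y)) ((pτ x)⁻¹ • ((στ ^ 2)⁻¹ • A)) x := by
    have hd : HasDerivAt Real.log (pτ x)⁻¹ (pτ x) := Real.hasDerivAt_log (hpos x).ne'
    have := hd.comp_hasFDerivAt x hgradA.hasFDerivAt
    rw [hasGradientAt_iff_hasFDerivAt]
    refine this.congr_fderiv ?_
    ext v; simp
  rw [hlog.gradient, huA]
  have hp0 : pτ x ≠ 0 := (hpos x).ne'
  have hD : ατ * στ' - στ * ατ' ≠ 0 := by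
    intro h; apply hdenom; linear_combination στ * h
  match_scalars <;> field_simp <;> ring
end
end
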